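/- Let f : ℝⁿ → ℝ be Lipschitz at infinity, and let Ω_f ⊆ ℝⁿ be the set of points where f is not differentiable. Then ∂f(∞) = co{ξ ∈ ℝⁿ : there exists a sequence x_k ∉ Ω_f with ‖x_k‖ → ∞ and ∇f(x_k) → ξ}, where co denotes the convex hull. -/

import Mathlib

open Filter Topology Metric Set Bornology
open scoped InnerProductSpace Pointwise

noncomputable section

/-- Euclidean `n`-space. -/
abbrev En (n : ℕ) : Type := EuclideanSpace ℝ (Fin n)

/-- The Clarke tangent cone at infinity of `C ⊆ E`, where "going to infinity" is
measured by `‖p x‖ → ∞` for a projection map `p`:  `v` belongs to the cone iff for all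
sequences `x k ∈ C` with `‖p (x k)‖ → ∞` and all positive sequences `t k → 0` there is a
sequence `w k → v` with `x k + t k • w k ∈ C` for all `k`. -/
def tangentConeAtInfty {E F : Type*} [NormedAddCommGroup E] [NormedSpace ℝ E] [Norm F]
    (p : E → F) (C : Set E) : Set E :=
  {v | ∀ (x : ℕ → E) (t : ℕ → ℝ), (∀ k, x k ∈ C) →
      Tendsto (fun k => ‖p (x k)‖) atTop atTop →
      (∀ k, 0 < t k) → Tendsto t atTop (𝓝 0) →
      ∃ w : ℕ → E, Tendsto w atTop (𝓝 v) ∧ ∀ k, x k + t k • w k ∈ C}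

/-- The epigraph of an extended-real-valued function. -/
def epig {n : ℕ} (f : En n → EReal) : Set (En n × ℝ) := {p | f p.1 ≤ (p.2 : EReal)}

/-- Clarke tangent cone at infinity of the epigraph of `f`, with respect to the index set
`I = {1,…,n} ⊆ {1,…,n+1}`, i.e. the projection `(x, y) ↦ x`. -/
def Tepi {n : ℕ} (f : En n → EReal) : Set (En n × ℝ) :=
  tangentConeAtInfty Prod.fst (epig f)

/-- Normal cone at infinity of the epigraph of `f` (polar cone of `Tepi f`, using the
inner product `⟪(v,r), (w,s)⟫ = ⟪v,w⟫ + r*s` of `ℝⁿ × ℝ = ℝ^{n+1}`). -/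
def Nepi {n : ℕ} (f : En n → EReal) : Set (En n × ℝ) :=
  {w | ∀ q ∈ Tepi f, ⟪q.1, w.1⟫_ℝ + q.2 * w.2 ≤ 0}

/-- The set `∂f(∞)` of subgradients of `f` at infinity. -/
def subgradInfty {n : ℕ} (f : En n → EReal) : Set (En n) :=
  {ξ | (ξ, (-1:ℝ)) ∈ Nepi f}

/-- Extended-real subtraction with the paper's convention that `λ₁ + λ₂ = +∞` whenever one
of the summands is `+∞`; thus `a - b = +∞` if `a = +∞` or `b = -∞`. -/
def esub (a b : EReal) : EReal := if a = ⊤ ∨ b = ⊥ then ⊤ else a - b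

/-- The difference quotient `(f (x + t • w) - f x) / t`. -/
def dq {n : ℕ} (f : En n → EReal) (x : En n) (t : ℝ) (w : En n) : EReal :=
  esub (f (x + t • w)) (f x) / (t : EReal)

/-- The filter of neighborhoods of infinity in `ℝⁿ` (`‖x‖ → ∞`). -/
def atInfty (n : ℕ) : Filter (En n) := comap (fun x : En n => ‖x‖) atTop

/-- `f` is Lipschitz at infinity: for some `L > 0` and `R > 0`,
`|f x - f x'| ≤ L ‖x - x'‖` whenever `‖x‖ > R` and `‖x'‖ > R`. -/
def LipschitzAtInfty {n : ℕ} (f : En n → ℝ) : Prop :=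
  ∃ L : ℝ, 0 < L ∧ ∃ R : ℝ, 0 < R ∧
    ∀ x x' : En n, R < ‖x‖ → R < ‖x'‖ → |f x - f x'| ≤ L * ‖x - x'‖


-- ## Auxiliary material

open MeasureTheory InnerProductSpace
open scoped NNReal

set_option maxHeartbeats 1000000

variable {n : ℕ}

theorem key_avg {K : ℝ≥0} {g : En n → ℝ} (hg : LipschitzWith K g) (v x : En n) {t ε : ℝ}
    (ht : 0 < t) (hε : 0 < ε) :
    ∃ y : En n, DifferentiableAt ℝ g y ∧ dist y x < ε + t * ‖v‖ ∧
      (g (x + t • v) - g x) / t ≤ ⟪gradient g y, v⟫_ℝ + ε := by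
  by_contra hcon
  push_neg at hcon
  set c : ℝ := (g (x + t • v) - g x) / t - ε with hc
  have hbound : ∀ y, DifferentiableAt ℝ g y → dist y x < ε + t * ‖v‖ →
      ⟪gradient g y, v⟫_ℝ ≤ c := by
    intro y h1 h2
    have := hcon y h1 h2
    simp only [hc]; linarith
  set δ : ℝ := min (ε/2) (t*ε/(2*K+1)) with hδ
  have hK1 : (0:ℝ) < 2*K+1 := by positivity
  have hδpos : 0 < δ := lt_min (by positivity) (by positivity)
  have hδ1 : δ ≤ ε/2 := min_le_left _ _
  have hδ2 : 2*K*δ < t*ε := by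
    have h1 : (2*K)*δ ≤ (2*K) * (t*ε/(2*K+1)) := by
      apply mul_le_mul_of_nonneg_left (min_le_right _ _) (by positivity)
    have h2 : (2*K) * (t*ε/(2*K+1)) < t*ε := by
      rw [mul_div_assoc'] at *
      rw [div_lt_iff₀ hK1]
      nlinarith [mul_pos ht hε]
    linarith
  set B : Set (En n) := ball x δ with hB
  have hBfin : volume B ≠ ⊤ := measure_ball_lt_top.ne
  have hBpos : volume B ≠ 0 := (measure_ball_pos volume x hδpos).ne'
  set A : ℝ := (volume B).toReal with hA
  have hApos : 0 < A := ENNReal.toReal_pos hBpos hBfin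
  have hgc : Continuous g := hg.continuous
  -- integrability of z ↦ g (z + a) on B
  haveI hBfinM : IsFiniteMeasure (volume.restrict B) :=
    ⟨Measure.restrict_apply_univ B ▸ hBfin.lt_top⟩
  have hint : ∀ a : En n, IntegrableOn (fun z => g (z + a)) B := by
    intro a
    exact ((hgc.comp (continuous_id.add continuous_const)).continuousOn.integrableOn_compact
      (isCompact_closedBall x δ)).mono_set ball_subset_closedBall
  set Φ : ℝ → ℝ := fun s => ∫ z in B, g (z + s • v) with hΦdef
  -- the shift map is measure preserving
  have hshift : ∀ a : En n, MeasurePreserving (fun z : En n => z + a) volume volume :=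
    fun a => measurePreserving_add_right volume a
  -- integrability of lineDeriv composed with shift
  have hldmeas : ∀ a : En n, AEStronglyMeasurable (fun z : En n => lineDeriv ℝ g (z + a) v)
      (volume.restrict B) := by
    intro a
    exact ((aestronglyMeasurable_lineDeriv hgc volume).comp_quasiMeasurePreserving
      (hshift a).quasiMeasurePreserving).restrict
  have hldbd : ∀ y : En n, ‖lineDeriv ℝ g y v‖ ≤ K * ‖v‖ :=
    fun y => norm_lineDeriv_le_of_lipschitz ℝ hg
  have hldint : ∀ a : En n, IntegrableOn (fun z : En n => lineDeriv ℝ g (z + a) v) B := by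
    intro a
    refine Integrable.mono' (integrable_const (K * ‖v‖)) (hldmeas a) ?_
    exact Eventually.of_forall fun z => hldbd _
  -- derivative of Φ
  have hΦ : ∀ s : ℝ, HasDerivAt Φ (∫ z in B, lineDeriv ℝ g (z + s • v) v) s := by
    intro s
    rw [hasDerivAt_iff_tendsto_slope]
    have hmap : Tendsto (fun u : ℝ => u - s) (𝓝[≠] s) (𝓝[≠] (0:ℝ)) := by
      apply tendsto_nhdsWithin_of_tendsto_nhds_of_eventually_within
      · have : Tendsto (fun u : ℝ => u - s) (𝓝 s) (𝓝 (s - s)) :=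
          (continuous_id.sub continuous_const).tendsto s
        simpa using this.mono_left nhdsWithin_le_nhds
      · filter_upwards [self_mem_nhdsWithin] with u hu
        simpa [sub_eq_zero] using hu
    -- a.e. line differentiability after shift
    have hae : ∀ᵐ z : En n, LineDifferentiableAt ℝ g (z + s • v) v :=
      ((hshift (s • v)).quasiMeasurePreserving.tendsto_ae).eventually
        (hg.ae_lineDifferentiableAt v)
    have hae' : ∀ᵐ z ∂(volume.restrict B), LineDifferentiableAt ℝ g (z + s • v) v :=
      ae_restrict_of_ae hae
    have key : Tendsto (fun u : ℝ => ∫ z in B, (u - s)⁻¹ * (g (z + u • v) - g (z + s • v)))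
        (𝓝[≠] s) (𝓝 (∫ z in B, lineDeriv ℝ g (z + s • v) v)) := by
      apply tendsto_integral_filter_of_dominated_convergence (fun _ => K * ‖v‖)
      · filter_upwards with u
        apply Continuous.aestronglyMeasurable
        exact continuous_const.mul ((hgc.comp (continuous_id.add continuous_const)).sub
          (hgc.comp (continuous_id.add continuous_const)))
      · filter_upwards [self_mem_nhdsWithin] with u hu
        filter_upwards with z
        have hus : u - s ≠ 0 := sub_ne_zero.mpr hu
        rw [norm_mul, norm_inv]
        rw [inv_mul_le_iff₀ (norm_pos_iff.mpr hus)]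
        have : dist (z + u • v) (z + s • v) = ‖u - s‖ * ‖v‖ := by
          rw [dist_eq_norm]
          have : z + u • v - (z + s • v) = (u - s) • v := by module
          rw [this, norm_smul]
        calc ‖g (z + u • v) - g (z + s • v)‖ = dist (g (z + u • v)) (g (z + s • v)) := by
              rw [dist_eq_norm]
          _ ≤ K * dist (z + u • v) (z + s • v) := hg.dist_le_mul _ _
          _ = K * (‖u - s‖ * ‖v‖) := by rw [this]
          _ = ‖u - s‖ * (↑K * ‖v‖) := by ring
      · exact integrableOn_const hBfin
      · apply ae_restrict_of_ae
        filter_upwards [hae] with z hz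
        have hd : HasDerivAt (fun r : ℝ => g (z + s • v + r • v)) (lineDeriv ℝ g (z + s • v) v) 0 :=
          hz.hasLineDerivAt
        have hslope := hasDerivAt_iff_tendsto_slope.mp hd
        refine (hslope.comp hmap).congr fun u => ?_
        simp only [Function.comp_apply, slope_def_field, zero_smul, add_zero, sub_zero]
        rw [show z + s • v + (u - s) • v = z + u • v by module, div_eq_inv_mul]
    apply key.congr'
    filter_upwards [self_mem_nhdsWithin] with u hu
    have hus : u - s ≠ 0 := sub_ne_zero.mpr hu
    have h2 : Φ u - Φ s = ∫ z in B, (g (z + u • v) - g (z + s • v)) :=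
      (integral_sub (hint (u • v)) (hint (s • v))).symm
    rw [slope_def_field, div_eq_inv_mul, h2]
    simp_rw [← smul_eq_mul]
    rw [integral_smul]
  -- FTC machinery
  have hderiv_eq : ∀ s : ℝ, deriv Φ s = ∫ z in B, lineDeriv ℝ g (z + s • v) v :=
    fun s => (hΦ s).deriv
  have hmeasD : Measurable (deriv Φ) := measurable_deriv Φ
  have hDbd : ∀ s : ℝ, ‖deriv Φ s‖ ≤ (K * ‖v‖) * A := by
    intro s
    rw [hderiv_eq]
    have := norm_setIntegral_le_of_norm_le_const (μ := volume) (s := B)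
      (C := (K : ℝ) * ‖v‖) hBfin.lt_top (f := fun z => lineDeriv ℝ g (z + s • v) v)
      (fun z _ => hldbd (z + s • v))
    rw [measureReal_def, ← hA] at this
    exact this
  have hDint : IntervalIntegrable (deriv Φ) volume 0 t := by
    refine (intervalIntegrable_const (c := (K * ‖v‖) * A)).mono_fun
      hmeasD.aestronglyMeasurable.restrict ?_
    exact Eventually.of_forall fun s => by simpa [abs_of_nonneg hApos.le] using hDbd s
  have hFTC : ∫ s in (0:ℝ)..t, deriv Φ s = Φ t - Φ 0 := by
    apply intervalIntegral.integral_eq_sub_of_hasDerivAt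
    · intro s _
      rw [hderiv_eq]
      exact hΦ s
    · exact hDint
  have hDle : ∀ s ∈ Icc (0:ℝ) t, deriv Φ s ≤ c * A := by
    intro s hs
    rw [hderiv_eq]
    have hae2 : ∀ᵐ z : En n, DifferentiableAt ℝ g (z + s • v) :=
      ((hshift (s • v)).quasiMeasurePreserving.tendsto_ae).eventually hg.ae_differentiableAt
    have hle : ∀ᵐ z ∂(volume.restrict B), lineDeriv ℝ g (z + s • v) v ≤ c := by
      rw [ae_restrict_iff' measurableSet_ball]
      filter_upwards [hae2] with z hz hzB
      rw [hz.lineDeriv_eq_fderiv]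
      have hgrad : ⟪gradient g (z + s • v), v⟫_ℝ = fderiv ℝ g (z + s • v) v :=
        InnerProductSpace.toDual_symm_apply
      rw [← hgrad]
      apply hbound _ hz
      have h1 : dist (z + s • v) z = s * ‖v‖ := by
        rw [dist_eq_norm]
        simp [norm_smul, abs_of_nonneg hs.1]
      have h2 : dist z x < δ := mem_ball.mp hzB
      have h3 : s * ‖v‖ ≤ t * ‖v‖ := mul_le_mul_of_nonneg_right hs.2 (norm_nonneg v)
      calc dist (z + s • v) x ≤ dist (z + s • v) z + dist z x := dist_triangle _ _ _
        _ < ε + t * ‖v‖ := by rw [h1]; linarith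
    calc ∫ z in B, lineDeriv ℝ g (z + s • v) v ≤ ∫ _z in B, c :=
          setIntegral_mono_ae_restrict (hldint (s • v))
            (integrableOn_const hBfin) hle
      _ = c * A := by rw [setIntegral_const, smul_eq_mul, measureReal_def, ← hA, mul_comm]
  have h5 : ∫ s in (0:ℝ)..t, deriv Φ s ≤ ∫ _s in (0:ℝ)..t, c * A :=
    intervalIntegral.integral_mono_on ht.le hDint intervalIntegrable_const hDle
  have h6 : ∫ _s in (0:ℝ)..t, (c*A) = t * (c * A) := by simp; ring
  have h7 : (g (x + t • v) - g x - 2*K*δ) * A ≤ Φ t - Φ 0 := by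
    have hsub : Φ t - Φ 0 = ∫ z in B, (g (z + t • v) - g (z + (0:ℝ) • v)) :=
      (integral_sub (hint _) (hint _)).symm
    rw [hsub]
    have h8 : ∀ z ∈ B, g (x + t • v) - g x - 2*K*δ ≤ g (z + t • v) - g (z + (0:ℝ) • v) := by
      intro z hz
      have hdz : dist z x < δ := mem_ball.mp hz
      have e1 : |g (z + t • v) - g (x + t • v)| ≤ K * δ := by
        have h := hg.dist_le_mul (z + t • v) (x + t • v)
        rw [Real.dist_eq] at h
        have : dist (z + t • v) (x + t • v) = dist z x := dist_add_right z x (t • v)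
        rw [this] at h
        exact h.trans (mul_le_mul_of_nonneg_left hdz.le K.2)
      have e2 : |g z - g x| ≤ K * δ := by
        have h := hg.dist_le_mul z x
        rw [Real.dist_eq] at h
        exact h.trans (mul_le_mul_of_nonneg_left hdz.le K.2)
      have e1' := abs_le.mp e1
      have e2' := abs_le.mp e2
      simp only [zero_smul, add_zero]
      obtain ⟨e1a, e1b⟩ := e1'
      obtain ⟨e2a, e2b⟩ := e2'
      nlinarith [K.2]
    calc (g (x + t • v) - g x - 2*K*δ) * A
        = ∫ _z in B, (g (x + t • v) - g x - 2*K*δ) := by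
          rw [setIntegral_const, smul_eq_mul, measureReal_def, ← hA, mul_comm]
      _ ≤ ∫ z in B, (g (z + t • v) - g (z + (0:ℝ) • v)) :=
          setIntegral_mono_on (integrableOn_const hBfin)
            ((hint _).sub (hint _)) measurableSet_ball h8
  have final : (g (x + t • v) - g x - 2*K*δ) * A ≤ (t * c) * A := by
    calc (g (x + t • v) - g x - 2*K*δ) * A ≤ Φ t - Φ 0 := h7
      _ = ∫ s in (0:ℝ)..t, deriv Φ s := hFTC.symm
      _ ≤ ∫ _s in (0:ℝ)..t, c * A := h5
      _ = t * (c * A) := h6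
      _ = (t * c) * A := by ring
  have hX : g (x + t • v) - g x - 2*K*δ ≤ t * c := le_of_mul_le_mul_right final hApos
  have htc : t * c = g (x + t • v) - g x - t * ε := by
    rw [hc]; field_simp
  nlinarith [hδ2]

open InnerProductSpace

variable {f : En n → ℝ} {L R : ℝ}

lemma exists_ext (hL : 0 < L)
    (hfLR : ∀ x x' : En n, R < ‖x‖ → R < ‖x'‖ → |f x - f x'| ≤ L * ‖x - x'‖) :
    ∃ g : En n → ℝ, LipschitzWith L.toNNReal g ∧ EqOn f g {x | R < ‖x‖} := by
  have h : LipschitzOnWith L.toNNReal f {x : En n | R < ‖x‖} := by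
    rw [lipschitzOnWith_iff_dist_le_mul]
    intro x hx y hy
    rw [Real.dist_eq, dist_eq_norm]
    simpa [Real.coe_toNNReal L hL.le] using hfLR x y hx hy
  exact h.extend_real

lemma eventuallyEq_of_gt {g : En n → ℝ} (hEq : EqOn f g {x : En n | R < ‖x‖}) {y : En n}
    (hy : R < ‖y‖) : f =ᶠ[nhds y] g := by
  have hopen : IsOpen {x : En n | R < ‖x‖} := isOpen_lt continuous_const continuous_norm
  filter_upwards [hopen.mem_nhds hy] with z hz using hEq hz

lemma grad_bound {K : ℝ≥0} {g : En n → ℝ} (hg : LipschitzWith K g)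
    (hEq : EqOn f g {x : En n | R < ‖x‖}) {y : En n} (hy : R < ‖y‖)
    (hd : DifferentiableAt ℝ f y) : ‖gradient f y‖ ≤ K := by
  have hfe := eventuallyEq_of_gt hEq hy
  have hdg : DifferentiableAt ℝ g y := hfe.differentiableAt_iff.mp hd
  have hgr : gradient f y = gradient g y := hfe.gradient_eq
  rw [hgr]
  show ‖(toDual ℝ (En n)).symm (fderiv ℝ g y)‖ ≤ K
  rw [LinearIsometryEquiv.norm_map]
  exact hdg.hasFDerivAt.le_of_lipschitz hg

/-- Key lemma transferred to `f`. -/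
lemma key_f {K : ℝ≥0} {g : En n → ℝ} (hg : LipschitzWith K g)
    (hEq : EqOn f g {x : En n | R < ‖x‖}) (v x : En n) {t ε : ℝ} (ht : 0 < t) (hε : 0 < ε)
    (hx : R + (ε + t * ‖v‖) < ‖x‖) :
    ∃ y, DifferentiableAt ℝ f y ∧ ‖x‖ - (ε + t * ‖v‖) < ‖y‖ ∧ R < ‖y‖ ∧
      (f (x + t • v) - f x) / t ≤ ⟪gradient f y, v⟫_ℝ + ε := by
  obtain ⟨y, hyd, hydist, hyq⟩ := key_avg hg v x ht hε
  have hεt : 0 ≤ ε + t * ‖v‖ := by positivity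
  have hyn : ‖x‖ - (ε + t * ‖v‖) < ‖y‖ := by
    have h1 : ‖x‖ - ‖y‖ ≤ ‖x - y‖ := norm_sub_norm_le x y
    have h2 : ‖x - y‖ = dist y x := by rw [dist_eq_norm, norm_sub_rev]
    linarith
  have hyR : R < ‖y‖ := by linarith
  have hfe := eventuallyEq_of_gt hEq hyR
  have hxR : R < ‖x‖ := by linarith
  have hxtR : R < ‖x + t • v‖ := by
    have h1 : ‖x‖ ≤ ‖x + t • v‖ + ‖t • v‖ := by
      have := norm_add_le (x + t • v) (-(t • v))
      simpa using this
    have h2 : ‖t • v‖ = t * ‖v‖ := by rw [norm_smul, Real.norm_eq_abs, abs_of_pos ht]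
    linarith
  refine ⟨y, hfe.differentiableAt_iff.mpr hyd, hyn, hyR, ?_⟩
  rw [hEq hxR, hEq hxtR, hfe.gradient_eq]
  exact hyq

/-- Existence of differentiability points of `f` of arbitrarily large norm, `n ≥ 1`. -/
lemma exists_diff_far (hn : 0 < n) {K : ℝ≥0} {g : En n → ℝ} (hg : LipschitzWith K g)
    (hEq : EqOn f g {x : En n | R < ‖x‖}) (m : ℝ) (hm : R ≤ m) :
    ∃ y : En n, DifferentiableAt ℝ f y ∧ m < ‖y‖ := by
  set e : En n := EuclideanSpace.single (⟨0, hn⟩ : Fin n) (1:ℝ) with he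
  have hne : ‖e‖ = 1 := by rw [he, EuclideanSpace.norm_single]; simp
  set z : En n := (|m| + 2) • e with hz
  have hnz : ‖z‖ = |m| + 2 := by
    rw [hz, norm_smul, hne, Real.norm_eq_abs, mul_one, abs_of_pos (by positivity)]
  have hpos : volume (ball z 1) ≠ 0 := (measure_ball_pos volume z one_pos).ne'
  have hae := hg.ae_differentiableAt (μ := volume)
  rw [MeasureTheory.ae_iff] at hae
  have hinter : (ball z 1 ∩ {y | DifferentiableAt ℝ g y}).Nonempty := by
    by_contra hemp
    rw [not_nonempty_iff_eq_empty] at hemp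
    have hsub : ball z 1 ⊆ {y | ¬ DifferentiableAt ℝ g y} := fun y hy hdy =>
      Set.eq_empty_iff_forall_notMem.mp hemp y ⟨hy, hdy⟩
    exact hpos (measure_mono_null hsub hae)
  obtain ⟨y, hyb, hyd⟩ := hinter
  have hyn : m < ‖y‖ := by
    have h1 : dist y z < 1 := mem_ball.mp hyb
    have h2 : ‖z‖ - ‖y‖ ≤ ‖z - y‖ := norm_sub_norm_le z y
    have h3 : ‖z - y‖ = dist y z := by rw [dist_eq_norm, norm_sub_rev]
    have h4 : m ≤ |m| := le_abs_self m
    linarith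
  have hyR : R < ‖y‖ := lt_of_le_of_lt hm hyn
  have hfe := eventuallyEq_of_gt hEq hyR
  exact ⟨y, hfe.differentiableAt_iff.mpr hyd, hyn⟩

/-- The set of limits of gradients along sequences of differentiability points at infinity. -/
def Sgrad (f : En n → ℝ) : Set (En n) :=
  {ξ : En n | ∃ x : ℕ → En n,
    (∀ k, DifferentiableAt ℝ f (x k)) ∧
    Tendsto (fun k => ‖x k‖) atTop atTop ∧
    Tendsto (fun k => gradient f (x k)) atTop (𝓝 ξ)}

lemma inner_gradient (g : En n → ℝ) (y v : En n) :
    ⟪gradient g y, v⟫_ℝ = fderiv ℝ g y v :=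
  InnerProductSpace.toDual_symm_apply

lemma Sgrad_subset_subgrad (f : En n → ℝ) :
    Sgrad f ⊆ subgradInfty (fun x => (f x : EReal)) := by
  rintro ξ ⟨x, hdiff, hnorm, hgrad⟩
  intro q hq
  -- choose radii of good approximation
  have hδ : ∀ k : ℕ, ∃ δ : ℝ, 0 < δ ∧ ∀ h : En n, ‖h‖ ≤ δ →
      ‖f (x k + h) - f (x k) - fderiv ℝ f (x k) h‖ ≤ (1/(k+1)) * ‖h‖ := by
    intro k
    have hh := (hdiff k).hasFDerivAt
    rw [hasFDerivAt_iff_isLittleO_nhds_zero] at hh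
    have h2 := hh.def (by positivity : (0:ℝ) < 1/(k+1))
    rw [Metric.eventually_nhds_iff] at h2
    obtain ⟨δ, hδpos, hδs⟩ := h2
    refine ⟨δ/2, by positivity, fun h hh2 => ?_⟩
    have : dist h 0 < δ := by
      rw [dist_zero_right]; linarith
    simpa using hδs this
  choose δ hδpos hδspec using hδ
  set t : ℕ → ℝ := fun k => min (1/(k+1)) (δ k/(‖q.1‖+1)) with hts
  have htpos : ∀ k, 0 < t k := by
    intro k
    apply lt_min (by positivity)
    have := hδpos k
    positivity
  have ht0 : Tendsto t atTop (𝓝 0) := by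
    apply squeeze_zero (fun k => (htpos k).le) (fun k => min_le_left _ _)
    exact tendsto_one_div_add_atTop_nhds_zero_nat
  have hmem : ∀ k, ((x k, f (x k)) : En n × ℝ) ∈ epig (fun x => (f x : EReal)) := by
    intro k
    simp [epig]
  obtain ⟨w, hw, hwmem⟩ := hq (fun k => (x k, f (x k))) t hmem (by simpa using hnorm) htpos ht0
  have hw1 : Tendsto (fun k => (w k).1) atTop (𝓝 q.1) := ((continuous_fst.tendsto q).comp hw)
  have hw2 : Tendsto (fun k => (w k).2) atTop (𝓝 q.2) := ((continuous_snd.tendsto q).comp hw)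
  have hwb : ∀ᶠ k in atTop, ‖(w k).1‖ ≤ ‖q.1‖ + 1 := by
    filter_upwards [hw1.eventually (Metric.ball_mem_nhds q.1 one_pos)] with k hk
    have : dist ((w k).1) q.1 < 1 := mem_ball.mp hk
    have h2 : ‖(w k).1‖ - ‖q.1‖ ≤ ‖(w k).1 - q.1‖ := norm_sub_norm_le _ _
    rw [dist_eq_norm] at this
    linarith
  have hineq : ∀ᶠ k in atTop,
      ⟪gradient f (x k), (w k).1⟫_ℝ ≤ (w k).2 + ‖(w k).1‖ * (1/(k+1)) := by
    filter_upwards [hwb] with k hk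
    have hm := hwmem k
    have hm2 : f (x k + t k • (w k).1) ≤ f (x k) + t k * (w k).2 := by
      have : ((f (x k + t k • (w k).1) : ℝ) : EReal) ≤ ((f (x k) + t k * (w k).2 : ℝ) : EReal) := hm
      exact_mod_cast this
    have hnh : ‖t k • (w k).1‖ ≤ δ k := by
      rw [norm_smul, Real.norm_eq_abs, abs_of_pos (htpos k)]
      have h1 : t k ≤ δ k/(‖q.1‖+1) := min_le_right _ _
      have h3 : 0 < ‖q.1‖ + 1 := by positivity
      calc t k * ‖(w k).1‖ ≤ (δ k/(‖q.1‖+1)) * (‖q.1‖+1) :=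
            mul_le_mul h1 hk (norm_nonneg _) (div_nonneg (hδpos k).le (by positivity))
        _ = δ k := by field_simp
    have happ := hδspec k _ hnh
    have habs := abs_le.mp (by rwa [Real.norm_eq_abs] at happ)
    have hlin : fderiv ℝ f (x k) (t k • (w k).1) = t k * fderiv ℝ f (x k) ((w k).1) := by
      rw [_root_.map_smul, smul_eq_mul]
    rw [hlin] at habs
    obtain ⟨ha1, ha2⟩ := habs
    rw [norm_smul, Real.norm_eq_abs, abs_of_pos (htpos k)] at ha1
    -- t k * Df w1 ≤ f(x+t w1) - f x + (1/(k+1)) t ‖w1‖ ≤ t w2 + t ‖w1‖/(k+1)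
    have hkey : t k * fderiv ℝ f (x k) ((w k).1) ≤ t k * ((w k).2 + ‖(w k).1‖ * (1/(k+1))) := by
      nlinarith [htpos k]
    have := le_of_mul_le_mul_left (by linarith [hkey] : t k * fderiv ℝ f (x k) ((w k).1) ≤ t k * ((w k).2 + ‖(w k).1‖ * (1/(k+1)))) (htpos k)
    rw [inner_gradient]
    exact this
  have hL : Tendsto (fun k => ⟪gradient f (x k), (w k).1⟫_ℝ) atTop (𝓝 ⟪ξ, q.1⟫_ℝ) :=
    hgrad.inner hw1
  have hR : Tendsto (fun k => (w k).2 + ‖(w k).1‖ * (1/(k+1))) atTop (𝓝 (q.2 + ‖q.1‖ * 0)) := by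
    apply hw2.add
    exact (hw1.norm).mul tendsto_one_div_add_atTop_nhds_zero_nat
  have hfin : ⟪ξ, q.1⟫_ℝ ≤ q.2 + ‖q.1‖ * 0 := le_of_tendsto_of_tendsto hL hR hineq
  rw [mul_zero, add_zero] at hfin
  have : ⟪q.1, ξ⟫_ℝ = ⟪ξ, q.1⟫_ℝ := real_inner_comm _ _
  simp only [this]
  linarith

lemma convex_subgrad (f : En n → EReal) : Convex ℝ (subgradInfty f) := by
  intro ξ1 h1 ξ2 h2 a b ha hb hab
  intro q hq
  have e1 := h1 q hq
  have e2 := h2 q hq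
  have hin : ⟪q.1, (a • ξ1 + b • ξ2 : En n)⟫_ℝ = a * ⟪q.1, ξ1⟫_ℝ + b * ⟪q.1, ξ2⟫_ℝ := by
    rw [inner_add_right, real_inner_smul_right, real_inner_smul_right]
  show ⟪q.1, (a • ξ1 + b • ξ2 : En n)⟫_ℝ + q.2 * (-1) ≤ 0
  rw [hin]
  have p1 : a * (⟪q.1, ξ1⟫_ℝ + q.2 * (-1)) ≤ 0 := mul_nonpos_of_nonneg_of_nonpos ha e1
  have p2 : b * (⟪q.1, ξ2⟫_ℝ + q.2 * (-1)) ≤ 0 := mul_nonpos_of_nonneg_of_nonpos hb e2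
  have hq2 : q.2 * (-1) = a * (q.2 * (-1)) + b * (q.2 * (-1)) := by
    rw [← add_mul, hab, one_mul]
  nlinarith

lemma Sgrad_bounded {K : ℝ≥0} {g : En n → ℝ} (hg : LipschitzWith K g)
    (hEq : EqOn f g {x : En n | R < ‖x‖}) :
    Sgrad f ⊆ closedBall 0 (K:ℝ) := by
  rintro ξ ⟨x, hdiff, hnorm, hgrad⟩
  rw [mem_closedBall_zero_iff]
  apply le_of_tendsto hgrad.norm
  filter_upwards [hnorm.eventually (eventually_gt_atTop R)] with k hk
  exact grad_bound hg hEq hk (hdiff k)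

lemma Sgrad_closed (f : En n → ℝ) : IsClosed (Sgrad f) := by
  apply isClosed_of_closure_subset
  intro ξ hξ
  obtain ⟨s, hs, hstend⟩ := mem_closure_iff_seq_limit.mp hξ
  choose xs hd hn hg using hs
  have hpick : ∀ j : ℕ, ∃ k : ℕ, (j:ℝ) ≤ ‖xs j k‖ ∧
      dist (gradient f (xs j k)) (s j) < 1/(j+1) := by
    intro j
    have h1 : ∀ᶠ k in atTop, (j:ℝ) ≤ ‖xs j k‖ := (hn j).eventually (eventually_ge_atTop _)
    have h2 : ∀ᶠ k in atTop, gradient f (xs j k) ∈ ball (s j) (1/(j+1)) :=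
      (hg j).eventually (Metric.ball_mem_nhds _ (by positivity))
    exact (h1.and (h2.mono fun k hk => mem_ball.mp hk)).exists
  choose k hk1 hk2 using hpick
  refine ⟨fun j => xs j (k j), fun j => hd j (k j), ?_, ?_⟩
  · exact tendsto_atTop_mono hk1 tendsto_natCast_atTop_atTop
  · rw [tendsto_iff_dist_tendsto_zero]
    apply squeeze_zero (fun j => dist_nonneg)
      (g := fun j => 1/(j+1) + dist (s j) ξ)
      (fun j => (dist_triangle _ (s j) ξ).trans (by linarith [hk2 j]))
    have ha : Tendsto (fun j : ℕ => 1/((j:ℝ)+1)) atTop (𝓝 0) :=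
      tendsto_one_div_add_atTop_nhds_zero_nat
    have hb : Tendsto (fun j => dist (s j) ξ) atTop (𝓝 0) :=
      tendsto_iff_dist_tendsto_zero.mp hstend
    simpa using ha.add hb

lemma Tepi_mem (hR : 0 < R) {K : ℝ≥0} {g : En n → ℝ} (hg : LipschitzWith K g)
    (hEq : EqOn f g {x : En n | R < ‖x‖}) (v : En n) (c : ℝ)
    (hc : ∀ s ∈ Sgrad f, ⟪s, v⟫_ℝ < c) :
    ((v, c) : En n × ℝ) ∈ Tepi (fun x => (f x : EReal)) := by
  intro p t hpmem hpnorm htpos ht0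
  set d : ℕ → ℝ := fun k => (f ((p k).1 + t k • v) - f ((p k).1)) / t k with hd
  have hmax : ∀ η : ℝ, 0 < η → ∀ᶠ k in atTop, d k < c + η := by
    intro η hη
    by_contra hcon
    rw [Filter.not_eventually] at hcon
    have hfreq : ∃ᶠ k in atTop, c + η ≤ d k :=
      hcon.mono fun k hk => not_lt.mp hk
    have hεpos : 0 < η/2 := by positivity
    have hpick : ∀ m : ℕ, ∃ y : En n, DifferentiableAt ℝ f y ∧ (m:ℝ) < ‖y‖ ∧ R < ‖y‖ ∧
        c + η/2 ≤ ⟪gradient f y, v⟫_ℝ := by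
      intro m
      have hEv : ∀ᶠ k in atTop, t k < 1 ∧ (R + 1 + (m:ℝ)) + (η/2 + ‖v‖) < ‖(p k).1‖ := by
        filter_upwards [ht0.eventually (eventually_lt_nhds one_pos),
          hpnorm.eventually (eventually_gt_atTop _)] with k h1 h2
        exact ⟨h1, h2⟩
      obtain ⟨k, hk1, ht1, hx⟩ := (hfreq.and_eventually hEv).exists
      have htv : t k * ‖v‖ ≤ ‖v‖ := by nlinarith [norm_nonneg v, htpos k]
      have hm0 : (0:ℝ) ≤ (m:ℝ) := Nat.cast_nonneg m
      have hxb : R + (η/2 + t k * ‖v‖) < ‖(p k).1‖ := by linarith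
      obtain ⟨y, hyd, hyn, hyR, hyq⟩ := key_f hg hEq v ((p k).1) (htpos k) hεpos hxb
      refine ⟨y, hyd, by linarith, hyR, ?_⟩
      have hdk : d k ≤ ⟪gradient f y, v⟫_ℝ + η/2 := hyq
      linarith
    choose y hyd hyn hyR hyq using hpick
    have hybd : ∀ m, gradient f (y m) ∈ closedBall (0 : En n) (K:ℝ) := fun m =>
      mem_closedBall_zero_iff.mpr (grad_bound hg hEq (hyR m) (hyd m))
    obtain ⟨ξ₀, -, φ, hφmono, hφtend⟩ :=
      tendsto_subseq_of_bounded Metric.isBounded_closedBall hybd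
    have hφtend' : Tendsto (fun m => gradient f (y (φ m))) atTop (𝓝 ξ₀) := hφtend
    have hξ₀S : ξ₀ ∈ Sgrad f := by
      refine ⟨fun m => y (φ m), fun m => hyd _, ?_, hφtend'⟩
      apply tendsto_atTop_mono (fun m => le_trans (Nat.cast_le.mpr hφmono.le_apply) (hyn (φ m)).le)
      exact tendsto_natCast_atTop_atTop
    have h1 : c + η/2 ≤ ⟪ξ₀, v⟫_ℝ := by
      apply ge_of_tendsto (hφtend'.inner tendsto_const_nhds)
      exact Eventually.of_forall fun m => hyq (φ m)
    have h2 := hc ξ₀ hξ₀S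
    linarith
  refine ⟨fun k => ((v, max c (d k)) : En n × ℝ), ?_, ?_⟩
  · apply Tendsto.prodMk_nhds tendsto_const_nhds
    rw [tendsto_order]
    constructor
    · intro b hb
      exact Eventually.of_forall fun k => lt_of_lt_of_le hb (le_max_left _ _)
    · intro b hb
      filter_upwards [hmax (b - c) (by linarith)] with k hk
      exact max_lt hb (by linarith)
  · intro k
    have hcoord : p k + t k • ((v, max c (d k)) : En n × ℝ)
        = (((p k).1 + t k • v, (p k).2 + t k * max c (d k)) : En n × ℝ) := by
      ext
      · simp
      · simp [smul_eq_mul]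
    rw [hcoord]
    show (f ((p k).1 + t k • v) : EReal) ≤ (((p k).2 + t k * max c (d k) : ℝ) : EReal)
    rw [EReal.coe_le_coe_iff]
    have hfp : f ((p k).1) ≤ (p k).2 := by
      have := hpmem k
      simp only [epig, mem_setOf_eq] at this
      exact_mod_cast this
    have hft : f ((p k).1 + t k • v) = f ((p k).1) + t k * d k := by
      simp only [hd]
      rw [mul_comm, div_mul_cancel₀ _ (ne_of_gt (htpos k))]
      ring
    have hmax2 : d k ≤ max c (d k) := le_max_right _ _
    have := mul_le_mul_of_nonneg_left hmax2 (htpos k).le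
    linarith

lemma isCompact_convexHull' {s : Set (En n)} (hs : IsCompact s) :
    IsCompact (convexHull ℝ s) := by
  rcases s.eq_empty_or_nonempty with rfl | ⟨x₀, hx₀⟩
  · simp
  set N : ℕ := Module.finrank ℝ (En n) + 1 with hN
  set T : (Fin N → ℝ) × (Fin N → En n) → En n := fun p => ∑ i, p.1 i • p.2 i with hT
  have hTcont : Continuous T := by
    apply continuous_finset_sum
    intro i _
    exact ((continuous_apply i).comp continuous_fst).smul ((continuous_apply i).comp continuous_snd)
  have hdom : IsCompact ((stdSimplex ℝ (Fin N)) ×ˢ (Set.pi univ fun _ : Fin N => s)) :=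
    (isCompact_stdSimplex _ _).prod (isCompact_univ_pi fun _ => hs)
  have himg : convexHull ℝ s = T '' ((stdSimplex ℝ (Fin N)) ×ˢ (Set.pi univ fun _ : Fin N => s)) := by
    apply Subset.antisymm
    · intro x hx
      obtain ⟨ι, hfin, z, w, hzs, hai, hw, hw1, hwz⟩ := eq_pos_convex_span_of_mem_convexHull hx
      have hcard : Fintype.card ι ≤ N := by
        refine le_trans hai.card_le_finrank_succ ?_
        have := Submodule.finrank_le (vectorSpan ℝ (Set.range z))
        omega
      set c : ℕ := Fintype.card ι with hc
      set e : ι ≃ Fin c := Fintype.equivFin ι with he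
      set Fw : ℕ → ℝ := fun j => if h : j < c then w (e.symm ⟨j, h⟩) else 0 with hFw
      set Fz : ℕ → En n := fun j => if h : j < c then z (e.symm ⟨j, h⟩) else x₀ with hFz
      have hsum1 : ∑ j ∈ Finset.range N, Fw j = 1 := by
        rw [← Finset.sum_subset (Finset.range_subset_range.mpr hcard)
          (fun j _ hj => by
            rw [Finset.mem_range] at hj
            simp only [hFw, dif_neg hj])]
        have h1 : ∑ j ∈ Finset.range c, Fw j = ∑ j : Fin c, Fw j :=
          (Fin.sum_univ_eq_sum_range Fw c).symm
        rw [h1]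
        have h2 : ∀ j : Fin c, Fw j = w (e.symm j) := by
          intro j
          simp only [hFw, dif_pos j.2]
        rw [Finset.sum_congr rfl fun j _ => h2 j]
        rw [Equiv.sum_comp e.symm w]
        exact hw1
      have hsumz : ∑ j ∈ Finset.range N, Fw j • Fz j = x := by
        rw [← Finset.sum_subset (Finset.range_subset_range.mpr hcard)
          (fun j _ hj => by
            rw [Finset.mem_range] at hj
            simp only [hFw, dif_neg hj, zero_smul])]
        have h1 : ∑ j ∈ Finset.range c, Fw j • Fz j = ∑ j : Fin c, Fw j • Fz j :=
          (Fin.sum_univ_eq_sum_range (fun j => Fw j • Fz j) c).symm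
        rw [h1]
        have h2 : ∀ j : Fin c, Fw j • Fz j = w (e.symm j) • z (e.symm j) := by
          intro j
          simp only [hFw, hFz, dif_pos j.2]
        rw [Finset.sum_congr rfl fun j _ => h2 j]
        rw [Equiv.sum_comp e.symm (fun i => w i • z i)]
        exact hwz
      refine ⟨(fun j : Fin N => Fw j, fun j : Fin N => Fz j), ⟨?_, ?_⟩, ?_⟩
      · constructor
        · intro j
          simp only [hFw]
          split
          · exact (hw _).le
          · exact le_refl 0
        · rw [Fin.sum_univ_eq_sum_range Fw N]
          exact hsum1
      · intro j _
        simp only [hFz]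
        split
        · exact hzs (Set.mem_range_self _)
        · exact hx₀
      · show ∑ j : Fin N, Fw j • Fz j = x
        rw [Fin.sum_univ_eq_sum_range (fun j => Fw j • Fz j) N]
        exact hsumz
    · rintro x ⟨⟨a, b⟩, ⟨⟨ha0, ha1⟩, hb⟩, rfl⟩
      have := Finset.centerMass_mem_convexHull (Finset.univ : Finset (Fin N))
        (fun i _ => ha0 i) (by rw [ha1]; exact one_pos)
        (fun i _ => hb i (Set.mem_univ i))
      rwa [Finset.centerMass, ha1, inv_one, one_smul] at this
  rw [himg]
  exact hdom.image hTcont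

/-- Proposition 5.3: for `f` Lipschitz at infinity, `∂f(∞)` is the convex hull of all
limits of gradients `∇f(x_k)` along sequences of differentiability points going to
infinity. -/
theorem stmt16 (n : ℕ) (f : En n → ℝ) (hf : LipschitzAtInfty f) :
    subgradInfty (fun x => (f x : EReal)) =
      convexHull ℝ {ξ : En n | ∃ x : ℕ → En n,
        (∀ k, DifferentiableAt ℝ f (x k)) ∧
        Tendsto (fun k => ‖x k‖) atTop atTop ∧
        Tendsto (fun k => gradient f (x k)) atTop (𝓝 ξ)} := by
  obtain ⟨L, hL, R, hR, hfLR⟩ := hf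
  obtain ⟨g, hg, hEq⟩ := exists_ext hL hfLR
  show subgradInfty (fun x => (f x : EReal)) = convexHull ℝ (Sgrad f)
  apply Subset.antisymm
  · intro ξ hξ
    by_contra hnot
    have hbd : Sgrad f ⊆ closedBall 0 ((L.toNNReal : ℝ)) := Sgrad_bounded hg hEq
    have hcomp : IsCompact (Sgrad f) :=
      (isCompact_closedBall (0 : En n) _).of_isClosed_subset (Sgrad_closed f) hbd
    have hhull : IsCompact (convexHull ℝ (Sgrad f)) := isCompact_convexHull' hcomp
    obtain ⟨φ, u, hphi, hu⟩ :=
      geometric_hahn_banach_closed_point (convex_convexHull ℝ _) hhull.isClosed hnot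
    set v : En n := (toDual ℝ (En n)).symm φ with hv
    have hvφ : ∀ a : En n, ⟪v, a⟫_ℝ = φ a := fun a => InnerProductSpace.toDual_symm_apply
    have hc : ∀ s ∈ Sgrad f, ⟪s, v⟫_ℝ < u := by
      intro s hs
      rw [real_inner_comm, hvφ]
      exact hphi s (subset_convexHull ℝ _ hs)
    have hT := Tepi_mem hR hg hEq v u hc
    have hle : ⟪v, ξ⟫_ℝ + u * (-1) ≤ 0 := hξ ((v, u) : En n × ℝ) hT
    rw [hvφ ξ] at hle
    linarith [hu]
  · exact convexHull_min (Sgrad_subset_subgrad f) (convex_subgrad _)
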